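/- arXiv:2605.19756 — 2 statements merged into one kernel-verified Lean document; each statement's English description precedes it below -/
import Mathlib

section
/- If a > 4 and b ∈ ℝ, then the EOS map F_{a,b} is strictly increasing on (−∞, −c], strictly decreasing on [−c, c], and strictly increasing on [c, ∞), where c = (1/a)·ln((1 + r)/(1 − r)) with r = √(1 − 4/a). In particular F_{a,b} has exactly three laps: on the first and third lap the map is increasing, and on the second lap it is decreasing. -/
/-- The EOS map with parameters `a`, `b`: `F_{a,b}(x) = x + b - 1/(e^{-ax} + 1)`. -/
noncomputable def eosMap (a b x : ℝ) : ℝ := x + b - 1 / (Real.exp (-(a * x)) + 1)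

/-!
The derivative of the EOS map is `F'(x) = 1 - a / (2 (cosh (a x) + 1))`. Since
`cosh (log t) = (t + t⁻¹) / 2`, the point `c` satisfies `2 cosh (a c) = a - 2`, so
`F'(x) = (cosh (a x) - cosh (a c)) / (cosh (a x) + 1)`, which is negative for `|x| < c` and positive
for `|x| > c`.
-/

open Real Set

theorem hasDerivAt_eosMap (a b x : ℝ) :
    HasDerivAt (eosMap a b) (1 - a / (2 * (cosh (a * x) + 1))) x := by
  set u := exp (-(a * x)) with hu
  have hu₀ : 0 < u := exp_pos _
  have hF : HasDerivAt (eosMap a b) (1 - u * a / (u + 1) ^ 2) x := by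
    have hlin := ((hasDerivAt_id' x).const_mul a).fun_neg
    have := ((hasDerivAt_id' x).add_const b).fun_sub
      ((hlin.exp.add_const 1).fun_inv (by positivity))
    unfold eosMap
    simpa only [one_div, mul_one, mul_neg, neg_neg] using this
  have hcosh : 2 * (cosh (a * x) + 1) = u + u⁻¹ + 2 := by
    rw [cosh_eq, hu, ← exp_neg, neg_neg]
    ring
  convert hF using 1
  rw [hcosh]
  field_simp
  ring

theorem cosh_log_one_add_div_one_sub {r : ℝ} (hr : |r| < 1) :
    cosh (log ((1 + r) / (1 - r))) = (1 + r ^ 2) / (1 - r ^ 2) := by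
  obtain ⟨hr₁, hr₂⟩ := abs_lt.mp hr
  have h₁ : 0 < 1 + r := by linarith
  have h₂ : 0 < 1 - r := by linarith
  rw [cosh_log (div_pos h₁ h₂), inv_div, show 1 - r ^ 2 = (1 - r) * (1 + r) by ring]
  field_simp
  ring

theorem eosMap_laps_of_two_mul_cosh_eq {a c : ℝ} (b : ℝ) (ha : 0 < a) (hc : 0 ≤ c)
    (hac : 2 * cosh (a * c) = a - 2) :
    StrictMonoOn (eosMap a b) (Iic (-c)) ∧ StrictAntiOn (eosMap a b) (Icc (-c) c) ∧
      StrictMonoOn (eosMap a b) (Ici c) := by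
  have hderiv : ∀ x, deriv (eosMap a b) x = (cosh (a * x) - cosh (a * c)) / (cosh (a * x) + 1) :=
    fun x => by
      rw [(hasDerivAt_eosMap a b x).deriv]
      field_simp [(cosh_pos (a * x)).ne']
      linear_combination hac
  have habs : ∀ x, |a * x| = a * |x| := fun x => by rw [abs_mul, abs_of_pos ha]
  have hpos : ∀ x, c < |x| → 0 < deriv (eosMap a b) x := fun x hx => by
    rw [hderiv]
    refine div_pos (sub_pos.mpr (cosh_lt_cosh.mpr ?_)) (by positivity)
    rw [habs, habs, abs_of_nonneg hc]
    exact mul_lt_mul_of_pos_left hx ha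
  have hneg : ∀ x, |x| < c → deriv (eosMap a b) x < 0 := fun x hx => by
    rw [hderiv]
    refine div_neg_of_neg_of_pos (sub_neg.mpr (cosh_lt_cosh.mpr ?_)) (by positivity)
    rw [habs, habs, abs_of_nonneg hc]
    exact mul_lt_mul_of_pos_left hx ha
  have hcont : Continuous (eosMap a b) :=
    continuous_iff_continuousAt.mpr fun x => (hasDerivAt_eosMap a b x).continuousAt
  refine ⟨strictMonoOn_of_deriv_pos (convex_Iic _) hcont.continuousOn ?_,
    strictAntiOn_of_deriv_neg (convex_Icc _ _) hcont.continuousOn ?_,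
    strictMonoOn_of_deriv_pos (convex_Ici _) hcont.continuousOn ?_⟩
  · rw [interior_Iic]
    exact fun x hx => hpos x (lt_abs.mpr (Or.inr (by linarith [mem_Iio.mp hx])))
  · rw [interior_Icc]
    exact fun x hx => hneg x (abs_lt.mpr hx)
  · rw [interior_Ici]
    exact fun x hx => hpos x (lt_abs.mpr (Or.inl hx))

/-- If `a > 4`, the EOS map has exactly three laps: it is strictly increasing on
`(-∞, -c]`, strictly decreasing on `[-c, c]`, and strictly increasing on `[c, ∞)`,
where `c = (1/a)·ln((1+r)/(1-r))` with `r = √(1 - 4/a)`. -/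
theorem eosMap_three_laps (a b : ℝ) (ha : 4 < a) :
    let r : ℝ := Real.sqrt (1 - 4 / a)
    let c : ℝ := (1 / a) * Real.log ((1 + r) / (1 - r))
    StrictMonoOn (eosMap a b) (Set.Iic (-c)) ∧
      StrictAntiOn (eosMap a b) (Set.Icc (-c) c) ∧
      StrictMonoOn (eosMap a b) (Set.Ici c) := by
  intro r c
  have ha₀ : 0 < a := by linarith
  have hr₀ : 0 ≤ r := sqrt_nonneg _
  have hr_sq : r ^ 2 = 1 - 4 / a := sq_sqrt (by rw [sub_nonneg, div_le_one ha₀]; linarith)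
  have hr₁ : r < 1 := by nlinarith [div_pos four_pos ha₀]
  have hac : a * c = log ((1 + r) / (1 - r)) := by
    simp only [c]
    field_simp
  refine eosMap_laps_of_two_mul_cosh_eq b ha₀ ?_ ?_
  · exact mul_nonneg (by positivity) <| log_nonneg <| by
      rw [le_div_iff₀ (by linarith)]; linarith
  · rw [hac, cosh_log_one_add_div_one_sub (abs_lt.mpr ⟨by linarith, hr₁⟩), hr_sq]
    field_simp
    ring
end

section
/- For all a, b ∈ ℝ and every x with F_{a,b}'(x) ≠ 0, the Schwarzian derivative of the EOS map is given explicitly by S F_{a,b}(x) = −a³·u·(1 − 6u + (a/2)·u) / (1 − a·u)², where u = σ(ax)·(1 − σ(ax)) and σ(t) = 1/(1 + e^{−t}). -/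
/-- The logistic sigmoid `σ(t) = 1/(1 + e^{-t})`. -/
noncomputable def sigmoid (t : ℝ) : ℝ := 1 / (1 + Real.exp (-t))

/-- The Schwarzian derivative of `f` at `x`: `Sf(x) = f'''(x)/f'(x) - (3/2)·(f''(x)/f'(x))²`. -/
noncomputable def schwarzian (f : ℝ → ℝ) (x : ℝ) : ℝ :=
  deriv (deriv (deriv f)) x / deriv f x - (3 / 2) * (deriv (deriv f) x / deriv f x) ^ 2

/-! With `σ = sigmoid (a · _)` and `u = σ (1 - σ)`, the logistic equation `σ' = a u` gives
`u' = a u (1 - 2σ)` and `(1 - 2σ)' = -2 a u`. Hence `F' = 1 - a u`, `F'' = -a² u (1 - 2σ)` and,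
using `(1 - 2σ)² = 1 - 4u`, `F''' = -a³ u (1 - 6u)`; the formula is then a rational identity
in `u`. -/

theorem sigmoid_eq_real_sigmoid : sigmoid = Real.sigmoid := by
  funext t
  rw [sigmoid, Real.sigmoid_def, one_div]

theorem eosMap_eq_sub_sigmoid (a b : ℝ) : eosMap a b = fun x => x + b - sigmoid (a * x) := by
  funext x
  rw [eosMap, sigmoid, add_comm (Real.exp _)]

theorem hasDerivAt_sigmoid_mul (a x : ℝ) :
    HasDerivAt (fun z => sigmoid (a * z)) (a * (sigmoid (a * x) * (1 - sigmoid (a * x)))) x := by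
  rw [sigmoid_eq_real_sigmoid]
  exact ((Real.hasDerivAt_sigmoid (a * x)).comp x ((hasDerivAt_id x).const_mul a)).congr_deriv
    (by ring)

theorem deriv_eosMap (a b : ℝ) :
    deriv (eosMap a b) = fun x => 1 - a * (sigmoid (a * x) * (1 - sigmoid (a * x))) := by
  funext x
  rw [eosMap_eq_sub_sigmoid]
  exact (((hasDerivAt_id x).add_const b).sub (hasDerivAt_sigmoid_mul a x)).deriv

theorem deriv_deriv_eosMap (a b : ℝ) :
    deriv (deriv (eosMap a b)) = fun x =>
      -a ^ 2 * (sigmoid (a * x) * (1 - sigmoid (a * x)) * (1 - 2 * sigmoid (a * x))) := by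
  funext x
  have hσ := hasDerivAt_sigmoid_mul a x
  rw [deriv_eosMap]
  exact (((hσ.mul (hσ.const_sub 1)).const_mul a).const_sub 1).deriv.trans (by ring)

theorem deriv_deriv_deriv_eosMap (a b x : ℝ) :
    deriv (deriv (deriv (eosMap a b))) x =
      -a ^ 3 * (sigmoid (a * x) * (1 - sigmoid (a * x))) *
        (1 - 6 * (sigmoid (a * x) * (1 - sigmoid (a * x)))) := by
  have hσ := hasDerivAt_sigmoid_mul a x
  rw [deriv_deriv_eosMap]
  exact (((hσ.mul (hσ.const_sub 1)).mul ((hσ.const_mul 2).const_sub 1)).const_mul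
    (-a ^ 2)).deriv.trans (by simp only [Pi.mul_apply]; ring)

theorem eosMap_schwarzian_formula_general (a b x : ℝ) :
    schwarzian (eosMap a b) x =
      -a ^ 3 * (sigmoid (a * x) * (1 - sigmoid (a * x))) *
          (1 - 6 * (sigmoid (a * x) * (1 - sigmoid (a * x))) +
            (a / 2) * (sigmoid (a * x) * (1 - sigmoid (a * x)))) /
        (1 - a * (sigmoid (a * x) * (1 - sigmoid (a * x)))) ^ 2 := by
  rw [schwarzian, deriv_deriv_deriv_eosMap, deriv_deriv_eosMap, deriv_eosMap]
  field_simp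
  ring

/-- For all `a, b ∈ ℝ` and every `x` with `F_{a,b}'(x) ≠ 0`, the Schwarzian derivative of
the EOS map is `S F_{a,b}(x) = -a³·u·(1 - 6u + (a/2)·u) / (1 - a·u)²`, where
`u = σ(ax)·(1 - σ(ax))`. -/
theorem eosMap_schwarzian_formula (a b x : ℝ) (hx : deriv (eosMap a b) x ≠ 0) :
    schwarzian (eosMap a b) x =
      -a ^ 3 * (sigmoid (a * x) * (1 - sigmoid (a * x))) *
          (1 - 6 * (sigmoid (a * x) * (1 - sigmoid (a * x))) +
            (a / 2) * (sigmoid (a * x) * (1 - sigmoid (a * x)))) /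
        (1 - a * (sigmoid (a * x) * (1 - sigmoid (a * x)))) ^ 2 :=
  eosMap_schwarzian_formula_general a b x
end
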